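/- arXiv:2503.04248 — 4 statements merged into one kernel-verified Lean document; each statement's English description precedes it below -/
import Mathlib

section
/- Let F and M be positive integers, N = F·M, let d ∈ Fin N, c ∈ ℂ with c ≠ 0, and let m : Fin F → ℂ. Let w : Fin N → ℂ be the sinusoid w(n) = c·exp(2πi·d·n/N) with N-point DFT W, and let z : Fin N → ℂ be a signal whose N-point DFT Z is supported on the F aliased bins of d: Z((d + f·M) mod N) = c·N·m(f) for each f ∈ Fin F, and Z(j) = 0 for every j not of the form (d + f·M) mod N. Then the ratio of frequency-domain powers satisfies sqrt((1/N)·∑_{k=0}^{N-1} ‖Z(k)‖²) / sqrt((1/N)·∑_{k=0}^{N-1} ‖W(k)‖²) = sqrt(∑_{f=0}^{F-1} ‖m(f)‖²). (Finite-signal, frequency-domain form of Theorem 1: the performance frequency gain at bin d equals the Euclidean norm of the first column of the frequency-lifted closed-loop response.) -/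
open scoped BigOperators

/-- The `N`-point discrete Fourier transform of a signal `x : Fin N → ℂ`:
`X k = ∑_{n=0}^{N-1} x n · exp(-2πi·n·k/N)`. -/
noncomputable def dft {N : ℕ} (x : Fin N → ℂ) : Fin N → ℂ := fun k =>
  ∑ n : Fin N, x n *
    Complex.exp (-2 * (Real.pi : ℂ) * Complex.I * (n.1 : ℂ) * (k.1 : ℂ) / (N : ℂ))

lemma exp_sum_ortho (N : ℕ) (hN : 0 < N) (d k : Fin N) :
    ∑ n : Fin N,
      Complex.exp (2 * (Real.pi : ℂ) * Complex.I * (d.1 : ℂ) * (n.1 : ℂ) / (N : ℂ)) *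
      Complex.exp (-2 * (Real.pi : ℂ) * Complex.I * (n.1 : ℂ) * (k.1 : ℂ) / (N : ℂ)) =
    if k = d then (N : ℂ) else 0 := by
  have hNC : ((N : ℕ) : ℂ) ≠ 0 := by exact_mod_cast hN.ne'
  set r : ℂ := Complex.exp (2 * (Real.pi : ℂ) * Complex.I * ((d.1 : ℂ) - (k.1 : ℂ)) / (N : ℂ)) with hr
  have hterm : ∀ n : Fin N,
      Complex.exp (2 * (Real.pi : ℂ) * Complex.I * (d.1 : ℂ) * (n.1 : ℂ) / (N : ℂ)) *
      Complex.exp (-2 * (Real.pi : ℂ) * Complex.I * (n.1 : ℂ) * (k.1 : ℂ) / (N : ℂ)) = r ^ n.1 := by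
    intro n
    rw [hr, ← Complex.exp_nat_mul, ← Complex.exp_add]
    congr 1
    field_simp
    ring
  rw [Finset.sum_congr rfl (fun n _ => hterm n)]
  rw [Fin.sum_univ_eq_sum_range (fun i => r ^ i)]
  by_cases hkd : k = d
  · subst hkd
    have : r = 1 := by
      rw [hr]; simp
    simp [this]
  · rw [if_neg hkd]
    have hrN : r ^ N = 1 := by
      rw [hr, ← Complex.exp_nat_mul]
      have : (N : ℂ) * (2 * (Real.pi : ℂ) * Complex.I * ((d.1 : ℂ) - (k.1 : ℂ)) / (N : ℂ))
          = ((((d.1 : ℤ) - (k.1 : ℤ)) : ℤ) : ℂ) * (2 * (Real.pi : ℂ) * Complex.I) := by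
        push_cast
        field_simp
      rw [this, Complex.exp_int_mul_two_pi_mul_I]
    have hr1 : r ≠ 1 := by
      intro h
      rw [hr, Complex.exp_eq_one_iff] at h
      obtain ⟨z, hz⟩ := h
      have h2 : (2 * (Real.pi : ℂ) * Complex.I) ≠ 0 := by
        simp [Real.pi_ne_zero, Complex.I_ne_zero]
      have hz' : ((d.1 : ℂ) - (k.1 : ℂ)) = z * N := by
        field_simp at hz
        have : 2 * (Real.pi : ℂ) * Complex.I * ((d.1 : ℂ) - (k.1 : ℂ))
            = 2 * (Real.pi : ℂ) * Complex.I * (z * N) := by linear_combination (2 * (Real.pi : ℂ) * Complex.I) * hz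
        exact mul_left_cancel₀ h2 this
      have hzint : (d.1 : ℤ) - (k.1 : ℤ) = z * N := by exact_mod_cast hz'
      have hd := d.2
      have hk := k.2
      have hz0 : z = 0 := by
        by_contra hz0
        have h1 : (1 : ℤ) ≤ |z| := Int.one_le_abs hz0
        have : (N : ℤ) ≤ |z * N| := by
          rw [abs_mul]
          calc (N : ℤ) = 1 * N := (one_mul _).symm
          _ ≤ |z| * |(N : ℤ)| := by
            apply mul_le_mul h1 (le_abs_self _) (by positivity) (abs_nonneg _)
        rw [← hzint] at this
        have : |(d.1 : ℤ) - (k.1 : ℤ)| < N := by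
          rw [abs_sub_lt_iff]; omega
        omega
      rw [hz0] at hzint
      simp at hzint
      exact hkd (Fin.ext (by omega))
    rw [geom_sum_eq hr1, hrN]
    simp

/-- Finite-signal, frequency-domain form of Theorem 1: for a single input sinusoid at
bin `d` whose output DFT is supported on the `F` aliased bins `(d + f·M) mod N` with
values `c·N·m f`, the ratio of frequency-domain powers equals the Euclidean norm of
the lifted gains `m`. -/
theorem pfg_freq_domain
    (F M : ℕ) (hF : 0 < F) (hM : 0 < M) (d : Fin (F * M)) (c : ℂ) (hc : c ≠ 0)
    (m : Fin F → ℂ) (w z : Fin (F * M) → ℂ)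
    (hw : ∀ n : Fin (F * M),
      w n = c * Complex.exp
        (2 * (Real.pi : ℂ) * Complex.I * (d.1 : ℂ) * (n.1 : ℂ) / ((F * M : ℕ) : ℂ)))
    (hZ1 : ∀ f : Fin F,
      dft z ⟨(d.1 + f.1 * M) % (F * M), Nat.mod_lt _ (Nat.mul_pos hF hM)⟩ =
        c * ((F * M : ℕ) : ℂ) * m f)
    (hZ2 : ∀ j : Fin (F * M),
      (∀ f : Fin F, j.1 ≠ (d.1 + f.1 * M) % (F * M)) → dft z j = 0) :
    Real.sqrt ((1 / ((F * M : ℕ) : ℝ)) * ∑ k : Fin (F * M), ‖dft z k‖ ^ 2) /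
      Real.sqrt ((1 / ((F * M : ℕ) : ℝ)) * ∑ k : Fin (F * M), ‖dft w k‖ ^ 2) =
    Real.sqrt (∑ f : Fin F, ‖m f‖ ^ 2) := by
  have hN : 0 < F * M := Nat.mul_pos hF hM
  -- DFT of w
  have hW : ∀ k : Fin (F * M), dft w k = if k = d then c * ((F * M : ℕ) : ℂ) else 0 := by
    intro k
    unfold dft
    have : ∀ n : Fin (F * M), w n *
        Complex.exp (-2 * (Real.pi : ℂ) * Complex.I * (n.1 : ℂ) * (k.1 : ℂ) / ((F * M : ℕ) : ℂ))
        = c * (Complex.exp (2 * (Real.pi : ℂ) * Complex.I * (d.1 : ℂ) * (n.1 : ℂ) / ((F * M : ℕ) : ℂ)) *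
          Complex.exp (-2 * (Real.pi : ℂ) * Complex.I * (n.1 : ℂ) * (k.1 : ℂ) / ((F * M : ℕ) : ℂ))) := by
      intro n; rw [hw n]; ring
    rw [Finset.sum_congr rfl (fun n _ => this n), ← Finset.mul_sum,
      exp_sum_ortho (F * M) hN d k]
    split <;> simp
  -- sum of squared norms of W
  have sumW : ∑ k : Fin (F * M), ‖dft w k‖ ^ 2 = ‖c‖ ^ 2 * ((F * M : ℕ) : ℝ) ^ 2 := by
    have : ∀ k : Fin (F * M), ‖dft w k‖ ^ 2
        = if k = d then ‖c‖ ^ 2 * ((F * M : ℕ) : ℝ) ^ 2 else 0 := by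
      intro k; rw [hW k]; split <;> simp [norm_mul, mul_pow]
    rw [Finset.sum_congr rfl (fun k _ => this k), Finset.sum_ite_eq' Finset.univ d]
    simp
  -- the aliasing map
  set g : Fin F → Fin (F * M) :=
    fun f => ⟨(d.1 + f.1 * M) % (F * M), Nat.mod_lt _ hN⟩ with hg
  have hinj : Function.Injective g := by
    intro f1 f2 h
    have h' : (d.1 + f1.1 * M) % (F * M) = (d.1 + f2.1 * M) % (F * M) := congrArg Fin.val h
    have hme : Nat.ModEq (F * M) (d.1 + f1.1 * M) (d.1 + f2.1 * M) := h'
    have hme2 : Nat.ModEq (F * M) (f1.1 * M) (f2.1 * M) := hme.add_left_cancel' d.1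
    have hme3 : Nat.ModEq F f1.1 f2.1 := Nat.ModEq.mul_right_cancel' hM.ne' hme2
    have := hme3
    unfold Nat.ModEq at this
    rw [Nat.mod_eq_of_lt f1.2, Nat.mod_eq_of_lt f2.2] at this
    exact Fin.ext this
  -- sum of squared norms of Z
  have sumZ : ∑ k : Fin (F * M), ‖dft z k‖ ^ 2
      = ‖c‖ ^ 2 * ((F * M : ℕ) : ℝ) ^ 2 * ∑ f : Fin F, ‖m f‖ ^ 2 := by
    have h1 : ∑ k : Fin (F * M), ‖dft z k‖ ^ 2
        = ∑ k ∈ Finset.univ.image g, ‖dft z k‖ ^ 2 := by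
      symm
      apply Finset.sum_subset (Finset.subset_univ _)
      intro j _ hj
      have hne : ∀ f : Fin F, j.1 ≠ (d.1 + f.1 * M) % (F * M) := by
        intro f heq
        exact hj (Finset.mem_image.mpr ⟨f, Finset.mem_univ _, Fin.ext heq.symm⟩)
      rw [hZ2 j hne]; simp
    rw [h1, Finset.sum_image (fun f _ f' _ h => hinj h)]
    have : ∀ f : Fin F, ‖dft z (g f)‖ ^ 2 = ‖c‖ ^ 2 * ((F * M : ℕ) : ℝ) ^ 2 * ‖m f‖ ^ 2 := by
      intro f
      rw [show dft z (g f) = c * ((F * M : ℕ) : ℂ) * m f from hZ1 f]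
      simp [norm_mul, mul_pow]
    rw [Finset.sum_congr rfl (fun f _ => this f), ← Finset.mul_sum]
  rw [sumZ, sumW]
  have hc' : 0 < ‖c‖ := norm_pos_iff.mpr hc
  have hNR : (0 : ℝ) < ((F * M : ℕ) : ℝ) := by exact_mod_cast hN
  have hA : (0 : ℝ) < 1 / ((F * M : ℕ) : ℝ) * (‖c‖ ^ 2 * ((F * M : ℕ) : ℝ) ^ 2) := by positivity
  have hre : 1 / ((F * M : ℕ) : ℝ) * (‖c‖ ^ 2 * ((F * M : ℕ) : ℝ) ^ 2 * ∑ f : Fin F, ‖m f‖ ^ 2)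
      = (1 / ((F * M : ℕ) : ℝ) * (‖c‖ ^ 2 * ((F * M : ℕ) : ℝ) ^ 2)) * ∑ f : Fin F, ‖m f‖ ^ 2 := by
    ring
  rw [hre, Real.sqrt_mul hA.le, mul_comm, mul_div_assoc,
    div_self (Real.sqrt_ne_zero'.mpr hA), mul_one]
end

section
/- Let F and M be positive integers, N = F·M, let d ∈ Fin N, c ∈ ℂ with c ≠ 0, and let m : Fin F → ℂ. Let w : Fin N → ℂ be the sinusoid w(n) = c·exp(2πi·d·n/N), and let z : Fin N → ℂ be a signal whose N-point DFT Z satisfies Z((d + f·M) mod N) = c·N·m(f) for each f ∈ Fin F and Z(j) = 0 for all other bins j. Then the ratio of time-domain powers satisfies sqrt((1/N)·∑_{n=0}^{N-1} ‖z(n)‖²) / sqrt((1/N)·∑_{n=0}^{N-1} ‖w(n)‖²) = sqrt(∑_{f=0}^{F-1} ‖m(f)‖²). (Finite-signal, time-domain form of Theorem 1, combining the Parseval-based power equivalence of Lemma 1 with the frequency-lifted output description.) -/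
open scoped BigOperators

open Complex Finset in
private lemma orth_aux {N : ℕ} (hN : 0 < N) (a b : Fin N) :
    ∑ k : Fin N, Complex.exp (2 * (Real.pi : ℂ) * I * ((b.1 : ℂ) - (a.1 : ℂ)) * (k.1 : ℂ) / N)
      = if a = b then (N : ℂ) else 0 := by
  have hNc : (N : ℂ) ≠ 0 := Nat.cast_ne_zero.mpr hN.ne'
  rcases eq_or_ne a b with h | h
  · subst h
    simp
  · simp only [if_neg h]
    set r : ℂ := Complex.exp (2 * (Real.pi : ℂ) * I * ((b.1 : ℂ) - (a.1 : ℂ)) / N) with hr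
    have hterm : ∀ k : Fin N,
        Complex.exp (2 * (Real.pi : ℂ) * I * ((b.1 : ℂ) - (a.1 : ℂ)) * (k.1 : ℂ) / N) = r ^ k.1 := by
      intro k
      rw [hr, ← Complex.exp_nat_mul]
      ring_nf
    have hrN : r ^ N = 1 := by
      rw [hr, ← Complex.exp_nat_mul]
      have : (N : ℂ) * (2 * (Real.pi : ℂ) * I * ((b.1 : ℂ) - (a.1 : ℂ)) / N)
          = (Int.cast ((b.1 : ℤ) - (a.1 : ℤ)) : ℂ) * (2 * (Real.pi : ℂ) * I) := by
        push_cast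
        field_simp
      rw [this, Complex.exp_int_mul_two_pi_mul_I]
    have hr1 : r ≠ 1 := by
      intro hr1
      rw [hr, Complex.exp_eq_one_iff] at hr1
      obtain ⟨n, hn⟩ := hr1
      have hpi : (2 * (Real.pi : ℂ) * I) ≠ 0 := by
        simp [Real.pi_ne_zero, Complex.I_ne_zero]
      have : ((b.1 : ℂ) - (a.1 : ℂ)) = n * N := by
        field_simp at hn
        have h2 : (2 * (Real.pi : ℂ) * I) * ((b.1 : ℂ) - (a.1 : ℂ))
            = (2 * (Real.pi : ℂ) * I) * ((n : ℂ) * N) := by linear_combination (2 * (Real.pi : ℂ) * I) * hn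
        exact mul_left_cancel₀ hpi h2
      have hz : ((b.1 : ℤ) - (a.1 : ℤ)) = n * N := by
        exact_mod_cast this
      have hb : (b.1 : ℤ) < N := by exact_mod_cast b.2
      have ha : (a.1 : ℤ) < N := by exact_mod_cast a.2
      have hab : (b.1 : ℤ) ≠ (a.1 : ℤ) := by
        simpa [Fin.ext_iff] using (fun hh => h (Fin.ext hh.symm) : b.1 = a.1 → False)
      rcases lt_trichotomy n 0 with hn0 | hn0 | hn0
      · nlinarith [a.2, b.2, Int.le_of_lt_add_one (show n < 0 + 1 by omega)]
      · simp [hn0] at hz; omega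
      · nlinarith
    calc ∑ k : Fin N, Complex.exp (2 * (Real.pi : ℂ) * I * ((b.1 : ℂ) - (a.1 : ℂ)) * (k.1 : ℂ) / N)
        = ∑ k ∈ Finset.range N, r ^ k := by
          rw [Fin.sum_univ_eq_sum_range (fun k => Complex.exp (2 * (Real.pi : ℂ) * I * ((b.1 : ℂ) - (a.1 : ℂ)) * (k : ℂ) / N))]
          exact Finset.sum_congr rfl fun k hk => by
            rw [← Complex.exp_nat_mul]; ring_nf
      _ = (r ^ N - 1) / (r - 1) := geom_sum_eq hr1 N
      _ = 0 := by rw [hrN]; simp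

open Complex Finset in
private lemma parseval_aux {N : ℕ} (hN : 0 < N) (z : Fin N → ℂ) :
    ∑ k : Fin N, ‖dft z k‖ ^ 2 = N * ∑ n : Fin N, ‖z n‖ ^ 2 := by
  have step1 : ∀ k : Fin N, dft z k * (starRingEnd ℂ) (dft z k)
      = ∑ n : Fin N, ∑ n' : Fin N, (z n * (starRingEnd ℂ) (z n')) *
          Complex.exp (2 * (Real.pi : ℂ) * I * ((n'.1 : ℂ) - (n.1 : ℂ)) * (k.1 : ℂ) / N) := by
    intro k
    unfold dft
    rw [map_sum, Finset.sum_mul_sum]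
    refine Finset.sum_congr rfl fun n _ => Finset.sum_congr rfl fun n' _ => ?_
    rw [map_mul, ← Complex.exp_conj]
    have hconj : (starRingEnd ℂ) (-2 * (Real.pi : ℂ) * I * (n'.1 : ℂ) * (k.1 : ℂ) / N)
        = 2 * (Real.pi : ℂ) * I * (n'.1 : ℂ) * (k.1 : ℂ) / N := by
      simp [map_div₀, map_mul, Complex.conj_I, map_ofNat]
    rw [hconj, mul_mul_mul_comm, ← Complex.exp_add]
    congr 1
    ring
  have key : ∑ k : Fin N, dft z k * (starRingEnd ℂ) (dft z k)
      = (N : ℂ) * ∑ n : Fin N, z n * (starRingEnd ℂ) (z n) := by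
    calc ∑ k : Fin N, dft z k * (starRingEnd ℂ) (dft z k)
        = ∑ k : Fin N, ∑ n : Fin N, ∑ n' : Fin N, (z n * (starRingEnd ℂ) (z n')) *
            Complex.exp (2 * (Real.pi : ℂ) * I * ((n'.1 : ℂ) - (n.1 : ℂ)) * (k.1 : ℂ) / N) :=
          Finset.sum_congr rfl fun k _ => step1 k
      _ = ∑ n : Fin N, ∑ n' : Fin N, ∑ k : Fin N, (z n * (starRingEnd ℂ) (z n')) *
            Complex.exp (2 * (Real.pi : ℂ) * I * ((n'.1 : ℂ) - (n.1 : ℂ)) * (k.1 : ℂ) / N) := by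
          rw [Finset.sum_comm]
          exact Finset.sum_congr rfl fun n _ => Finset.sum_comm
      _ = ∑ n : Fin N, ∑ n' : Fin N, (z n * (starRingEnd ℂ) (z n')) *
            (if n = n' then (N : ℂ) else 0) := by
          refine Finset.sum_congr rfl fun n _ => Finset.sum_congr rfl fun n' _ => ?_
          rw [← Finset.mul_sum, orth_aux hN n n']
      _ = (N : ℂ) * ∑ n : Fin N, z n * (starRingEnd ℂ) (z n) := by
          rw [Finset.mul_sum]
          refine Finset.sum_congr rfl fun n _ => ?_
          simp [mul_ite, Finset.sum_ite_eq]
          ring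
  simp only [Complex.mul_conj] at key
  have key2 : ∑ k : Fin N, Complex.normSq (dft z k) = N * ∑ n : Fin N, Complex.normSq (z n) := by
    exact_mod_cast key
  simpa [Complex.sq_norm] using key2

/-- Finite-signal, time-domain form of Theorem 1: for a single input sinusoid at bin `d`
whose output DFT is supported on the `F` aliased bins `(d + f·M) mod N` with values
`c·N·m f`, the ratio of time-domain powers equals the Euclidean norm of the lifted
gains `m`. -/
theorem pfg_time_domain
    (F M : ℕ) (hF : 0 < F) (hM : 0 < M) (d : Fin (F * M)) (c : ℂ) (hc : c ≠ 0)
    (m : Fin F → ℂ) (w z : Fin (F * M) → ℂ)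
    (hw : ∀ n : Fin (F * M),
      w n = c * Complex.exp
        (2 * (Real.pi : ℂ) * Complex.I * (d.1 : ℂ) * (n.1 : ℂ) / ((F * M : ℕ) : ℂ)))
    (hZ1 : ∀ f : Fin F,
      dft z ⟨(d.1 + f.1 * M) % (F * M), Nat.mod_lt _ (Nat.mul_pos hF hM)⟩ =
        c * ((F * M : ℕ) : ℂ) * m f)
    (hZ2 : ∀ j : Fin (F * M),
      (∀ f : Fin F, j.1 ≠ (d.1 + f.1 * M) % (F * M)) → dft z j = 0) :
    Real.sqrt ((1 / ((F * M : ℕ) : ℝ)) * ∑ n : Fin (F * M), ‖z n‖ ^ 2) /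
      Real.sqrt ((1 / ((F * M : ℕ) : ℝ)) * ∑ n : Fin (F * M), ‖w n‖ ^ 2) =
    Real.sqrt (∑ f : Fin F, ‖m f‖ ^ 2) := by
  have hN : 0 < F * M := Nat.mul_pos hF hM
  have hNr : (0 : ℝ) < ((F * M : ℕ) : ℝ) := by exact_mod_cast hN
  -- the w power
  have hwn : ∀ n : Fin (F * M), ‖w n‖ = ‖c‖ := by
    intro n
    rw [hw n, norm_mul]
    have harg : (2 * (Real.pi : ℂ) * Complex.I * (d.1 : ℂ) * (n.1 : ℂ) / ((F * M : ℕ) : ℂ))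
        = ((2 * Real.pi * (d.1 : ℝ) * (n.1 : ℝ) / ((F * M : ℕ) : ℝ) : ℝ) : ℂ) * Complex.I := by
      push_cast
      ring
    rw [harg]
    rw [Complex.norm_exp_ofReal_mul_I, mul_one]
  have hwsum : ∑ n : Fin (F * M), ‖w n‖ ^ 2 = ((F * M : ℕ) : ℝ) * ‖c‖ ^ 2 := by
    simp [hwn, Finset.sum_const, mul_comm]
  -- the aliased bins
  set e : Fin F → Fin (F * M) := fun f =>
    ⟨(d.1 + f.1 * M) % (F * M), Nat.mod_lt _ hN⟩ with he
  have hinj : Function.Injective e := by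
    intro f f' hff
    have hval : (d.1 + f.1 * M) % (F * M) = (d.1 + f'.1 * M) % (F * M) := congrArg Fin.val hff
    have h1 : f.1 * M < F * M := (Nat.mul_lt_mul_right hM).mpr f.2
    have h2 : f'.1 * M < F * M := (Nat.mul_lt_mul_right hM).mpr f'.2
    have := Nat.ModEq.add_left_cancel' d.1 (hval : _ ≡ _ [MOD F * M])
    have heq : f.1 * M = f'.1 * M := by
      have := this
      unfold Nat.ModEq at this
      rwa [Nat.mod_eq_of_lt h1, Nat.mod_eq_of_lt h2] at this
    exact Fin.ext (Nat.eq_of_mul_eq_mul_right hM heq)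
  have hsupp : ∑ k : Fin (F * M), ‖dft z k‖ ^ 2
      = ∑ f : Fin F, ‖dft z (e f)‖ ^ 2 := by
    have hvan : ∀ k ∈ Finset.univ, k ∉ Finset.image e Finset.univ → ‖dft z k‖ ^ 2 = 0 := by
      intro k _ hk
      have hne : ∀ f : Fin F, k.1 ≠ (d.1 + f.1 * M) % (F * M) := by
        intro f hkf
        exact hk (Finset.mem_image.mpr ⟨f, Finset.mem_univ f, Fin.ext hkf.symm⟩)
      rw [hZ2 k hne]
      simp
    calc ∑ k : Fin (F * M), ‖dft z k‖ ^ 2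
        = ∑ k ∈ Finset.image e Finset.univ, ‖dft z k‖ ^ 2 :=
          (Finset.sum_subset (Finset.subset_univ _) hvan).symm
      _ = ∑ f : Fin F, ‖dft z (e f)‖ ^ 2 := Finset.sum_image (fun f _ f' _ h => hinj h)
  have hval : ∀ f : Fin F, ‖dft z (e f)‖ ^ 2 = ‖c‖ ^ 2 * ((F * M : ℕ) : ℝ) ^ 2 * ‖m f‖ ^ 2 := by
    intro f
    have : dft z (e f) = c * ((F * M : ℕ) : ℂ) * m f := hZ1 f
    rw [this]
    simp [norm_mul, mul_pow]
  have hzsum : ∑ n : Fin (F * M), ‖z n‖ ^ 2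
      = ((F * M : ℕ) : ℝ) * (‖c‖ ^ 2 * ∑ f : Fin F, ‖m f‖ ^ 2) := by
    have hp := parseval_aux hN z
    rw [hsupp] at hp
    have : ∑ f : Fin F, ‖dft z (e f)‖ ^ 2
        = ‖c‖ ^ 2 * ((F * M : ℕ) : ℝ) ^ 2 * ∑ f : Fin F, ‖m f‖ ^ 2 := by
      rw [Finset.mul_sum]
      exact Finset.sum_congr rfl fun f _ => hval f
    rw [this] at hp
    have h3 : ((F * M : ℕ) : ℝ) * (∑ n : Fin (F * M), ‖z n‖ ^ 2)
        = ((F * M : ℕ) : ℝ) * (((F * M : ℕ) : ℝ) * (‖c‖ ^ 2 * ∑ f : Fin F, ‖m f‖ ^ 2)) := by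
      rw [← hp]; ring
    exact mul_left_cancel₀ hNr.ne' h3
  rw [hzsum, hwsum]
  have h1 : (1 / ((F * M : ℕ) : ℝ)) * (((F * M : ℕ) : ℝ) * (‖c‖ ^ 2 * ∑ f : Fin F, ‖m f‖ ^ 2))
      = ‖c‖ ^ 2 * ∑ f : Fin F, ‖m f‖ ^ 2 := by
    field_simp
  have h2 : (1 / ((F * M : ℕ) : ℝ)) * (((F * M : ℕ) : ℝ) * ‖c‖ ^ 2) = ‖c‖ ^ 2 := by
    field_simp
  rw [h1, h2]
  rw [Real.sqrt_mul (sq_nonneg _), Real.sqrt_sq (norm_nonneg c)]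
  exact mul_div_cancel_left₀ _ (norm_ne_zero_iff.mpr hc)
end

section
/- Let F and M be positive integers and N = F·M. Let ν_l : Fin M → ℂ be a slow-rate signal with M-point DFT V_l, and let ν_h : Fin N → ℂ be its upsampled version, ν_h(n) = ν_l(n/F) if F divides n and ν_h(n) = 0 otherwise. Then the N-point DFT V_h of ν_h satisfies V_h(k) = V_l(k mod M) for every k ∈ Fin N; in particular V_h is M-periodic in the frequency index, V_h(k + f·M) = V_l(k) for all k ∈ Fin M and f < F. -/
open scoped BigOperators

lemma dft_upsample_key
    (F M : ℕ) (hF : 0 < F) (hM : 0 < M) (νl : Fin M → ℂ) (νh : Fin (F * M) → ℂ)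
    (hνh : ∀ n : Fin (F * M),
      νh n = if h : F ∣ n.1 then νl ⟨n.1 / F, Nat.div_lt_of_lt_mul n.2⟩ else 0)
    (k : Fin (F * M)) : dft νh k = dft νl ⟨k.1 % M, Nat.mod_lt _ hM⟩ := by
  have hFc : (F : ℂ) ≠ 0 := Nat.cast_ne_zero.mpr hF.ne'
  have hMc : (M : ℂ) ≠ 0 := Nat.cast_ne_zero.mpr hM.ne'
  unfold dft
  set f : Fin (F * M) → ℂ := fun n => νh n *
    Complex.exp (-2 * (Real.pi : ℂ) * Complex.I * (n.1 : ℂ) * (k.1 : ℂ) / ((F*M : ℕ) : ℂ)) with hf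
  have hemb : Function.Injective (fun m : Fin M => (⟨F * m.1, by
      exact (Nat.mul_lt_mul_left hF).mpr m.2⟩ : Fin (F * M))) := by
    intro a b hab
    simp only [Fin.mk.injEq] at hab
    exact Fin.ext (Nat.eq_of_mul_eq_mul_left hF hab)
  have h1 : ∑ n : Fin (F * M), f n
      = ∑ n ∈ Finset.univ.map ⟨_, hemb⟩, f n := by
    refine (Finset.sum_subset (Finset.subset_univ _) ?_).symm
    intro n _ hn
    have hnd : ¬ F ∣ n.1 := by
      intro ⟨c, hc⟩
      apply hn
      simp only [Finset.mem_map, Finset.mem_univ, true_and, Function.Embedding.coeFn_mk]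
      exact ⟨⟨c, Nat.lt_of_mul_lt_mul_left (show F * c < F * M by omega)⟩, Fin.ext hc.symm⟩
    simp [hf, hνh n, hnd]
  rw [h1, Finset.sum_map]
  refine Finset.sum_congr rfl fun m _ => ?_
  simp only [Function.Embedding.coeFn_mk, hf]
  have hd : F ∣ F * m.1 := Dvd.intro _ rfl
  rw [hνh]
  simp only [hd, dif_pos]
  have hidx : (F * m.1) / F = m.1 := Nat.mul_div_cancel_left _ hF
  congr 1
  · congr 1
    exact Fin.ext hidx
  · -- exponent equality
    set q := k.1 / M with hq
    set r := k.1 % M with hr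
    have hnat : M * q + r = k.1 := Nat.div_add_mod k.1 M
    have hk : (k.1 : ℂ) = (M : ℂ) * (q : ℂ) + (r : ℂ) := by exact_mod_cast hnat.symm
    have harg : -2 * (Real.pi : ℂ) * Complex.I * ((F * m.1 : ℕ) : ℂ) * (k.1 : ℂ) / ((F*M : ℕ) : ℂ)
        = ((-(m.1 * q : ℕ) : ℤ) : ℂ) * (2 * (Real.pi : ℂ) * Complex.I)
          + -2 * (Real.pi : ℂ) * Complex.I * (m.1 : ℂ) * (r : ℂ) / (M : ℂ) := by
      rw [hk]
      push_cast
      field_simp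
      ring
    rw [harg, Complex.exp_add, Complex.exp_int_mul_two_pi_mul_I, one_mul]

/-- The DFT of a factor-`F` upsampled signal is the `M`-periodic repetition of the
slow-rate DFT: `V_h(k) = V_l(k mod M)`; in particular `V_h(k + f·M) = V_l(k)`. -/
theorem dft_upsample
    (F M : ℕ) (hF : 0 < F) (hM : 0 < M) (νl : Fin M → ℂ) (νh : Fin (F * M) → ℂ)
    (hνh : ∀ n : Fin (F * M),
      νh n = if h : F ∣ n.1 then νl ⟨n.1 / F, Nat.div_lt_of_lt_mul n.2⟩ else 0) :
    (∀ k : Fin (F * M), dft νh k = dft νl ⟨k.1 % M, Nat.mod_lt _ hM⟩) ∧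
    (∀ k : Fin M, ∀ f : Fin F,
      dft νh ⟨k.1 + f.1 * M, by
        calc k.1 + f.1 * M < M + f.1 * M := Nat.add_lt_add_right k.2 _
          _ = (f.1 + 1) * M := by ring
          _ ≤ F * M := Nat.mul_le_mul_right M f.2⟩ = dft νl k) := by
  constructor
  · exact dft_upsample_key F M hF hM νl νh hνh
  · intro k f
    rw [dft_upsample_key F M hF hM νl νh hνh]
    congr 1
    exact Fin.ext (by simp [Nat.add_mul_mod_self_right, Nat.mod_eq_of_lt k.2])
end

section
/- Let F be a positive integer and let ν_l : ℤ → ℂ be a slow-rate signal. Define the upsampled signal ν_h : ℤ → ℂ by ν_h(n) = ν_l(n/F) if F divides n and ν_h(n) = 0 otherwise. Then applying the zero-order-hold FIR filter ∑_{f=0}^{F-1} q^{-f} to ν_h yields the sample-and-hold interpolation: for every n ∈ ℤ, ∑_{f=0}^{F-1} ν_h(n - f) = ν_l(⌊n/F⌋). -/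
open scoped BigOperators

/-- Applying the zero-order-hold FIR filter `∑_{f=0}^{F-1} q^{-f}` to the factor-`F`
upsampled signal yields the sample-and-hold interpolation `n ↦ ν_l(⌊n/F⌋)`. -/
theorem zoh_of_upsample
    (F : ℕ) (hF : 0 < F) (νl νh : ℤ → ℂ)
    (hνh : ∀ n : ℤ, νh n = if (F : ℤ) ∣ n then νl (n / (F : ℤ)) else 0) :
    ∀ n : ℤ, ∑ f ∈ Finset.range F, νh (n - (f : ℤ)) = νl (n / (F : ℤ)) := by
  intro n
  have hFpos : (0 : ℤ) < (F : ℤ) := by exact_mod_cast hF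
  have hr0 : 0 ≤ n % (F : ℤ) := Int.emod_nonneg n (by positivity)
  have hrF : n % (F : ℤ) < (F : ℤ) := Int.emod_lt_of_pos n hFpos
  set r : ℕ := (n % (F : ℤ)).toNat with hr
  have hrcast : (r : ℤ) = n % (F : ℤ) := Int.toNat_of_nonneg hr0
  have hmem : r ∈ Finset.range F := by
    rw [Finset.mem_range]
    exact_mod_cast hrcast ▸ hrF
  rw [Finset.sum_eq_single_of_mem r hmem]
  · rw [hνh]
    have hdvd : (F : ℤ) ∣ n - r := by
      rw [hrcast]
      exact Int.dvd_self_sub_of_emod_eq rfl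
    rw [if_pos hdvd]
    congr 1
    have hsub : n - (r : ℤ) = (F : ℤ) * (n / F) := by
      have := Int.mul_ediv_add_emod n (F : ℤ)
      rw [hrcast]; omega
    rw [hsub, Int.mul_ediv_cancel_left _ (ne_of_gt hFpos)]
  · intro f hf hne
    rw [hνh, if_neg]
    intro hdvd
    rw [Finset.mem_range] at hf
    have hdvd2 : (F : ℤ) ∣ n - r := by
      rw [hrcast]; exact Int.dvd_self_sub_of_emod_eq rfl
    have : (F : ℤ) ∣ ((f : ℤ) - r) := by
      have h3 : (f : ℤ) - r = (n - r) - (n - f) := by ring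
      rw [h3]; exact dvd_sub hdvd2 hdvd
    have hfF : (f : ℤ) < F := by exact_mod_cast hf
    have hrFn : (r : ℤ) < F := hrcast ▸ hrF
    have : (f : ℤ) = r := by
      rcases this with ⟨k, hk⟩
      have hf0 : (0:ℤ) ≤ f := Int.ofNat_nonneg f
      have hr0' : (0:ℤ) ≤ r := Int.ofNat_nonneg r
      have hk1 : k < 1 := by nlinarith
      have hk2 : -1 < k := by nlinarith
      have : k = 0 := by omega
      subst this; simp at hk; omega
    exact hne (by exact_mod_cast this)
end
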